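/- If M = ∅, then cl(conv(P^B ∖ G_D^C)) = P^B. -/

import Mathlib

open Set Pointwise

noncomputable section

variable {n : ℕ} {ι : Type*} [Fintype ι]

/-- Recession cone of a set `A`. -/
def recc (A : Set (Fin n → ℝ)) : Set (Fin n → ℝ) :=
  {d | ∀ a ∈ A, ∀ t : ℝ, 0 ≤ t → a + t • d ∈ A}

/-- The translated simplicial cone `P^B = {x̄ + Σ_j x_j r^j : x_j ≥ 0}`. -/
def PBset (xb : Fin n → ℝ) (r : ι → Fin n → ℝ) : Set (Fin n → ℝ) :=
  {x | ∃ c : ι → ℝ, (∀ j, 0 ≤ c j) ∧ x = xb + ∑ j, c j • r j}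

/-- The recession cone of `P^B`, i.e. `{Σ_j t_j r^j : t_j ≥ 0}`. -/
def reccPBset (r : ι → Fin n → ℝ) : Set (Fin n → ℝ) :=
  {x | ∃ t : ι → ℝ, (∀ j, 0 ≤ t j) ∧ x = ∑ j, t j • r j}

/-- `λ⁻ = inf {λ ≥ 0 : x̄ + λ d ∈ C}` (`+∞` if the halfline misses `C`). -/
noncomputable def lamM (xb d : Fin n → ℝ) (C : Set (Fin n → ℝ)) : EReal :=
  sInf ((fun l : ℝ => (l : EReal)) '' {l : ℝ | 0 ≤ l ∧ xb + l • d ∈ C})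

/-- `λ⁺ = sup {λ ≥ 0 : x̄ + λ d ∈ C}` (`−∞` if the halfline misses `C`). -/
noncomputable def lamP (xb d : Fin n → ℝ) (C : Set (Fin n → ℝ)) : EReal :=
  sSup ((fun l : ℝ => (l : EReal)) '' {l : ℝ | 0 ≤ l ∧ xb + l • d ∈ C})

/-- `N₀`: indices whose halfline misses `C`. -/
def N0set (xb : Fin n → ℝ) (r : ι → Fin n → ℝ) (C : Set (Fin n → ℝ)) : Set ι :=
  {j | ∀ l : ℝ, 0 ≤ l → xb + l • r j ∉ C}

/-- `N₁`: indices with `0 < λ⁻ < +∞` and `λ⁺ = +∞`. -/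
def N1set (xb : Fin n → ℝ) (r : ι → Fin n → ℝ) (C : Set (Fin n → ℝ)) : Set ι :=
  {j | 0 < lamM xb (r j) C ∧ lamM xb (r j) C < ⊤ ∧ lamP xb (r j) C = ⊤}

/-- `N₂`: indices with `0 < λ⁻ < +∞` and `λ⁻ < λ⁺ < +∞`. -/
def N2set (xb : Fin n → ℝ) (r : ι → Fin n → ℝ) (C : Set (Fin n → ℝ)) : Set ι :=
  {j | 0 < lamM xb (r j) C ∧ lamM xb (r j) C < ⊤ ∧
    lamM xb (r j) C < lamP xb (r j) C ∧ lamP xb (r j) C < ⊤}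

/-- `G_D = {x̄} + conv(⋃_{j∈D} {λ r^j : λ > λ⁻_j})`. -/
def GDset (xb : Fin n → ℝ) (r : ι → Fin n → ℝ) (C : Set (Fin n → ℝ)) (D : Finset ι) :
    Set (Fin n → ℝ) :=
  {xb} + convexHull ℝ (⋃ j ∈ (D : Set ι),
    {y : Fin n → ℝ | ∃ l : ℝ, lamM xb (r j) C < (l : EReal) ∧ y = l • r j})

/-- `G_D^C = G_D + recc(C)`. -/
def GDCset (xb : Fin n → ℝ) (r : ι → Fin n → ℝ) (C : Set (Fin n → ℝ)) (D : Finset ι) :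
    Set (Fin n → ℝ) :=
  GDset xb r C D + recc C

/-- `γ_{ij} = sup {γ ≥ 0 : λ⁻_i r^i + γ r^j ∈ recc(G_D^C)}` (`+∞` if unbounded,
`−∞ = sSup ∅` if the set is empty). -/
noncomputable def gam (xb : Fin n → ℝ) (r : ι → Fin n → ℝ) (C : Set (Fin n → ℝ))
    (D : Finset ι) (i j : ι) : EReal :=
  sSup ((fun g : ℝ => (g : EReal)) ''
    {g : ℝ | 0 ≤ g ∧ (lamM xb (r i) C).toReal • r i + g • r j ∈ recc (GDCset xb r C D)})

/-- `M = {i ∈ D : γ_{ij} > 0 for all j ∈ N∖D}`. -/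
def Mset (xb : Fin n → ℝ) (r : ι → Fin n → ℝ) (C : Set (Fin n → ℝ)) (D : Finset ι) :
    Set ι :=
  {i | i ∈ D ∧ ∀ j, j ∉ D → 0 < gam xb r C D i j}

/-- `ε_j(S) = min_{i∈S} γ_{ij}` for `S ≠ ∅`, and `+∞` for `S = ∅` (via `sInf ∅ = ⊤`). -/
noncomputable def eps (xb : Fin n → ℝ) (r : ι → Fin n → ℝ) (C : Set (Fin n → ℝ))
    (D : Finset ι) (S : Finset ι) (j : ι) : EReal :=
  sInf ((fun i => gam xb r C D i j) '' (S : Set ι))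

/-!
Written in the coordinates of the `r k`, every point of `G_D^C` is `x̄ + Σ (a k + e k) • r k`,
where `a ≥ 0` is supported on `D` with `Σ_{k ∈ D} a k / λ⁻_k > 1` (this describes `conv` of the
rays generating `G_D`) and `Σ e k • r k ∈ recc C`. Hence `x̄` and the rays `x̄ + t • r k`, `k ∉ D`,
avoid `G_D^C`. For `k ∈ D`, `M = ∅` yields `j ∉ D` with `γ_{kj} ≤ 0`; then `x̄ + t • r k + g • r j`
avoids `G_D^C` for every `g > 0`, since otherwise the decomposition exhibits
`λ⁻_k • r k + g' • r j ∈ recc G_D^C` for some `g' > 0`. Letting `g → 0`, the closed convex set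
`cl conv (P^B \ G_D^C)` contains `x̄` and all the rays `x̄ + ℝ₊ • r k`, hence all of `P^B`.
-/

section Convexity

variable {E : Type*} [AddCommGroup E] [Module ℝ E]

theorem Convex.add_sum_smul_mem {κ : Type*} {K : Set E} (hK : Convex ℝ K) {x : E} (hx : x ∈ K)
    {s : Finset κ} {u : κ → E} (hu : ∀ k ∈ s, ∀ t : ℝ, 0 ≤ t → x + t • u k ∈ K)
    {μ : κ → ℝ} (hμ : ∀ k ∈ s, 0 ≤ μ k) :
    x + ∑ k ∈ s, μ k • u k ∈ K := by
  suffices h : ∀ t : ℝ, 0 ≤ t → x + t • ∑ k ∈ s, μ k • u k ∈ K by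
    simpa using h 1 zero_le_one
  refine Finset.sum_induction _ (fun d => ∀ t : ℝ, 0 ≤ t → x + t • d ∈ K) ?_
    (fun _ _ => by simpa using hx) ?_
  · intro d d' hd hd' t ht
    have hmid := hK (hd (2 * t) (by positivity)) (hd' (2 * t) (by positivity))
      (by norm_num : (0 : ℝ) ≤ 1 / 2) (by norm_num : (0 : ℝ) ≤ 1 / 2) (by norm_num)
    convert hmid using 1
    module
  · intro k hk t ht
    simpa [smul_smul] using hu k hk (t * μ k) (mul_nonneg ht (hμ k hk))

theorem add_smul_mem_convexHull {Q : Set E} (hQ : ∀ c : ℝ, 1 ≤ c → ∀ q ∈ Q, c • q ∈ Q)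
    {u : E} {L : ℝ} (hu : ∀ s, L < s → s • u ∈ Q) {h : E} (hh : h ∈ convexHull ℝ Q)
    {t : ℝ} (ht : 0 ≤ t) : h + t • u ∈ convexHull ℝ Q := by
  rcases ht.eq_or_lt with rfl | ht
  · simpa using hh
  -- `h + t • u = (1 - ε) • ((1 - ε)⁻¹ • h) + ε • (s • u)` with `s > L` and `ε = t / s < 1`
  set s := max L t + 1
  have hts : t < s := by grind
  have hs0 : 0 < s := ht.trans hts
  set ε := t / s
  have hε1 : ε < 1 := (div_lt_one hs0).2 hts
  have hscaled : (1 - ε)⁻¹ • h ∈ convexHull ℝ Q := by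
    have hsub : (1 - ε)⁻¹ • Q ⊆ Q := by
      rintro _ ⟨q, hq, rfl⟩
      exact hQ _ (one_le_inv₀ (by linarith) |>.2 (by linarith [div_pos ht hs0])) q hq
    exact convexHull_mono hsub (by rw [convexHull_smul]; exact smul_mem_smul_set hh)
  have hcomb := convex_convexHull ℝ Q hscaled (subset_convexHull ℝ Q (hu s (by grind)))
    (sub_nonneg.2 hε1.le) (div_pos ht hs0).le (sub_add_cancel 1 ε)
  convert hcomb using 1
  rw [smul_smul, smul_smul, mul_inv_cancel₀ (by linarith), one_smul, div_mul_cancel₀ _ hs0.ne']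

theorem mem_closure_of_forall_pos_add_smul_mem [TopologicalSpace E] [ContinuousAdd E]
    [ContinuousSMul ℝ E] {S : Set E} {x u : E} (h : ∀ g : ℝ, 0 < g → x + g • u ∈ S) :
    x ∈ closure S := by
  have hlim : Filter.Tendsto (fun g : ℝ => x + g • u) (nhdsWithin (0 : ℝ) (Ioi 0)) (nhds x) := by
    have hcont := (show Continuous fun g : ℝ => x + g • u by fun_prop).tendsto 0
    simpa using hcont.mono_left nhdsWithin_le_nhds
  exact mem_closure_of_tendsto hlim (eventually_mem_nhdsWithin.mono h)

end Convexity

section RecessionCone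

variable {A B : Set (Fin n → ℝ)} {d d' : Fin n → ℝ}

theorem smul_mem_recc (hd : d ∈ recc A) {s : ℝ} (hs : 0 ≤ s) : s • d ∈ recc A :=
  fun a ha t ht => by simpa [smul_smul] using hd a ha (t * s) (mul_nonneg ht hs)

theorem add_mem_recc (hd : d ∈ recc A) (hd' : d' ∈ recc A) : d + d' ∈ recc A :=
  fun a ha t ht => by simpa [smul_add, add_assoc] using hd' _ (hd a ha t ht) t ht

theorem recc_subset_recc_recc : recc A ⊆ recc (recc A) :=
  fun _ hd _ ha _ ht => add_mem_recc ha (smul_mem_recc hd ht)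

theorem recc_subset_recc_add : recc B ⊆ recc (A + B) := by
  rintro d hd _ ⟨a, ha, b, hb, rfl⟩ t ht
  exact ⟨a, ha, b + t • d, hd b hb t ht, (add_assoc a b _).symm⟩

end RecessionCone

section SimplicialCone

variable {xb : Fin n → ℝ} {r : ι → Fin n → ℝ}

theorem PBset_eq_image :
    PBset xb r = (xb + ·) '' (Fintype.linearCombination ℝ r '' Ici 0) := by
  ext x
  constructor
  · rintro ⟨c, hc, rfl⟩
    exact ⟨_, ⟨c, hc, rfl⟩, by rw [Fintype.linearCombination_apply]⟩
  · rintro ⟨_, ⟨c, hc, rfl⟩, rfl⟩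
    exact ⟨c, hc, by rw [Fintype.linearCombination_apply]⟩

theorem convex_PBset : Convex ℝ (PBset xb r) := by
  rw [PBset_eq_image]
  exact ((convex_Ici 0).linear_image _).translate xb

theorem isClosed_PBset (hr : LinearIndependent ℝ r) : IsClosed (PBset xb r) := by
  rw [PBset_eq_image]
  have hemb := LinearMap.isClosedEmbedding_of_injective
    (LinearMap.ker_eq_bot.2 hr.fintypeLinearCombination_injective)
  exact (Homeomorph.addLeft xb).isClosedMap _ (hemb.isClosedMap _ isClosed_Ici)

theorem self_mem_PBset : xb ∈ PBset xb r := ⟨0, fun _ => le_rfl, by simp⟩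

theorem add_smul_mem_PBset {x : Fin n → ℝ} (hx : x ∈ PBset xb r) (k : ι) {t : ℝ} (ht : 0 ≤ t) :
    x + t • r k ∈ PBset xb r := by
  classical
  obtain ⟨c, hc, rfl⟩ := hx
  refine ⟨c + Pi.single k t, fun j => add_nonneg (hc j) ?_, ?_⟩
  · by_cases hj : j = k <;> simp [hj, ht]
  · simp only [← Fintype.linearCombination_apply, map_add,
      Fintype.linearCombination_apply_single, add_assoc]

end SimplicialCone

def orthantBeyondSimplex {κ : Type*} (D : Finset κ) (L : κ → ℝ) : Set (κ → ℝ) :=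
  {a | (∀ k, 0 ≤ a k) ∧ (∀ k ∉ D, a k = 0) ∧ 1 < ∑ k ∈ D, a k / L k}

theorem convex_orthantBeyondSimplex {κ : Type*} (D : Finset κ) (L : κ → ℝ) :
    Convex ℝ (orthantBeyondSimplex D L) := by
  rintro a ⟨ha0, haD, ha1⟩ b ⟨hb0, hbD, hb1⟩ s t hs ht hst
  refine ⟨fun k => ?_, fun k hk => ?_, ?_⟩
  · simp only [Pi.add_apply, Pi.smul_apply, smul_eq_mul]
    nlinarith [ha0 k, hb0 k]
  · simp [haD k hk, hbD k hk]
  · have hsum : ∑ k ∈ D, (s • a + t • b) k / L k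
        = s * ∑ k ∈ D, a k / L k + t * ∑ k ∈ D, b k / L k := by
      simp only [Finset.mul_sum, ← Finset.sum_add_distrib, Pi.add_apply, Pi.smul_apply,
        smul_eq_mul, add_div, mul_div_assoc]
    rw [hsum]
    nlinarith [mul_le_mul_of_nonneg_left (min_le_left (∑ k ∈ D, a k / L k) (∑ k ∈ D, b k / L k)) hs,
      mul_le_mul_of_nonneg_left (min_le_right (∑ k ∈ D, a k / L k) (∑ k ∈ D, b k / L k)) ht,
      lt_min ha1 hb1]

theorem mem_recc_GDCset {κ : Type*} {xb : Fin n → ℝ} {r : κ → Fin n → ℝ} {C : Set (Fin n → ℝ)}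
    {D : Finset κ} {L : κ → ℝ} (hL : ∀ k ∈ D, lamM xb (r k) C = L k) (hLpos : ∀ k ∈ D, 0 < L k)
    {i : κ} (hi : i ∈ D) : r i ∈ recc (GDCset xb r C D) := by
  have hGD : r i ∈ recc (GDset xb r C D) := by
    rintro _ ⟨x, hx, h, hh, rfl⟩ t ht
    refine ⟨x, hx, h + t • r i, add_smul_mem_convexHull ?_ (L := L i) ?_ hh ht,
      (add_assoc x h _).symm⟩
    · intro c hc _ hq
      obtain ⟨j, hj, l, hl, rfl⟩ := mem_iUnion₂.1 hq
      rw [hL j hj, EReal.coe_lt_coe_iff] at hl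
      refine mem_iUnion₂.2 ⟨j, hj, c * l, ?_, by rw [smul_smul]⟩
      rw [hL j hj, EReal.coe_lt_coe_iff]
      nlinarith [hLpos j hj]
    · intro s hs
      exact mem_iUnion₂.2 ⟨i, hi, s, by rw [hL i hi]; exact_mod_cast hs, rfl⟩
  rw [GDCset, add_comm]
  exact recc_subset_recc_add hGD

section ExcludedSet

variable {xb : Fin n → ℝ} {r : ι → Fin n → ℝ} {C : Set (Fin n → ℝ)} {D : Finset ι} {L : ι → ℝ}

theorem convexHull_subset_image_orthantBeyondSimplex
    (hL : ∀ k ∈ D, lamM xb (r k) C = L k) (hLpos : ∀ k ∈ D, 0 < L k) :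
    convexHull ℝ (⋃ j ∈ (D : Set ι),
      {y : Fin n → ℝ | ∃ l : ℝ, lamM xb (r j) C < (l : EReal) ∧ y = l • r j})
      ⊆ Fintype.linearCombination ℝ r '' orthantBeyondSimplex D L := by
  classical
  refine convexHull_min ?_ ((convex_orthantBeyondSimplex D L).linear_image _)
  intro _ hy
  obtain ⟨j, hj, l, hl, rfl⟩ := mem_iUnion₂.1 hy
  rw [hL j hj, EReal.coe_lt_coe_iff] at hl
  have hlpos : 0 < l := (hLpos j hj).trans hl
  refine ⟨Pi.single j l, ⟨fun k => ?_, fun k hk => ?_, ?_⟩,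
    Fintype.linearCombination_apply_single ℝ r j l⟩
  · by_cases hk : k = j <;> simp [hk, hlpos.le]
  · simp [ne_of_mem_of_not_mem hj hk |>.symm]
  · rw [Finset.sum_eq_single_of_mem j hj fun k _ hk => by simp [hk], Pi.single_eq_same]
    exact (one_lt_div (hLpos j hj)).2 hl

theorem exists_coeffs_of_mem_GDCset (hr : LinearIndependent ℝ r) (hrecc : recc C ⊆ reccPBset r)
    (hL : ∀ k ∈ D, lamM xb (r k) C = L k) (hLpos : ∀ k ∈ D, 0 < L k) {c : ι → ℝ}
    (hc : xb + ∑ k, c k • r k ∈ GDCset xb r C D) :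
    ∃ a ∈ orthantBeyondSimplex D L, ∃ e : ι → ℝ,
      (∀ k, 0 ≤ e k) ∧ ∑ k, e k • r k ∈ recc C ∧ c = a + e := by
  obtain ⟨_, ⟨x, hx, h, hh, rfl⟩, y, hy, hsum⟩ := hc
  rw [mem_singleton_iff.1 hx] at hsum
  obtain ⟨a, ha, rfl⟩ := convexHull_subset_image_orthantBeyondSimplex hL hLpos hh
  obtain ⟨e, he, rfl⟩ := hrecc hy
  refine ⟨a, ha, e, he, hy, hr.fintypeLinearCombination_injective ?_⟩
  have hsum' : ∑ k, c k • r k = Fintype.linearCombination ℝ r a + ∑ k, e k • r k := by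
    simpa only [add_assoc, add_right_inj] using hsum.symm
  rw [Fintype.linearCombination_apply ℝ r c, hsum', map_add, Fintype.linearCombination_apply ℝ r e]

theorem one_lt_sum_div_of_mem_GDCset (hr : LinearIndependent ℝ r)
    (hrecc : recc C ⊆ reccPBset r) (hL : ∀ k ∈ D, lamM xb (r k) C = L k)
    (hLpos : ∀ k ∈ D, 0 < L k) {c : ι → ℝ} (hc : xb + ∑ k, c k • r k ∈ GDCset xb r C D) :
    1 < ∑ k ∈ D, c k / L k := by
  obtain ⟨a, ⟨-, -, ha⟩, e, he, -, rfl⟩ := exists_coeffs_of_mem_GDCset hr hrecc hL hLpos hc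
  refine ha.trans_le (Finset.sum_le_sum fun k hk => ?_)
  exact div_le_div_of_nonneg_right (by simp [he k]) (hLpos k hk).le

theorem xb_notMem_GDCset (hr : LinearIndependent ℝ r) (hrecc : recc C ⊆ reccPBset r)
    (hL : ∀ k ∈ D, lamM xb (r k) C = L k) (hLpos : ∀ k ∈ D, 0 < L k) :
    xb ∉ GDCset xb r C D := fun h =>
  absurd (one_lt_sum_div_of_mem_GDCset hr hrecc hL hLpos (c := 0) (by simpa using h)) (by simp)

theorem xb_add_smul_notMem_GDCset (hr : LinearIndependent ℝ r) (hrecc : recc C ⊆ reccPBset r)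
    (hL : ∀ k ∈ D, lamM xb (r k) C = L k) (hLpos : ∀ k ∈ D, 0 < L k) {k : ι} (hk : k ∉ D)
    (t : ℝ) : xb + t • r k ∉ GDCset xb r C D := by
  classical
  intro h
  rw [← Fintype.linearCombination_apply_single ℝ r k t, Fintype.linearCombination_apply] at h
  have hsum := one_lt_sum_div_of_mem_GDCset hr hrecc hL hLpos h
  rw [Finset.sum_eq_zero fun j hj => by simp [ne_of_mem_of_not_mem hj hk]] at hsum
  exact absurd hsum (by norm_num)

theorem exists_sub_smul_add_smul_mem_recc_of_mem_GDCset (hr : LinearIndependent ℝ r)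
    (hrecc : recc C ⊆ reccPBset r) (hL : ∀ k ∈ D, lamM xb (r k) C = L k)
    (hLpos : ∀ k ∈ D, 0 < L k) {i j : ι} (hi : i ∈ D) (hj : j ∉ D) {t g : ℝ}
    (hmem : xb + t • r i + g • r j ∈ GDCset xb r C D) :
    ∃ s, L i < s ∧ s ≤ t ∧ (t - s) • r i + g • r j ∈ recc C := by
  classical
  set φ := Fintype.linearCombination ℝ r
  set c : ι → ℝ := Pi.single i t + Pi.single j g
  have hφc : φ c = t • r i + g • r j := by
    simp only [c, φ, map_add, Fintype.linearCombination_apply_single]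
  rw [add_assoc, ← hφc, Fintype.linearCombination_apply] at hmem
  obtain ⟨a, ⟨ha0, haD, ha1⟩, e, he0, heC, hcae⟩ :=
    exists_coeffs_of_mem_GDCset hr hrecc hL hLpos hmem
  have hce : ∀ k, c k = a k + e k := fun k => congr_fun hcae k
  have ha : a = Pi.single i (a i) := by
    funext k
    rcases eq_or_ne k i with rfl | hki
    · simp
    by_cases hkD : k ∈ D
    · have hck : c k = 0 := by simp [c, hki, ne_of_mem_of_not_mem hkD hj]
      simp only [Pi.single_eq_of_ne hki]
      linarith [hce k, ha0 k, he0 k]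
    · simp [hki, haD k hkD]
  refine ⟨a i, ?_, ?_, ?_⟩
  · rw [ha, Finset.sum_eq_single_of_mem i hi fun k _ hk => by simp [hk], Pi.single_eq_same,
      one_lt_div (hLpos i hi)] at ha1
    exact ha1
  · linarith [hce i, he0 i, show c i = t by simp [c, ne_of_mem_of_not_mem hi hj]]
  · have hφa : φ a = a i • r i := by
      conv_lhs => rw [ha]
      exact Fintype.linearCombination_apply_single ℝ r i (a i)
    have he : φ e = (t - a i) • r i + g • r j := by
      rw [sub_smul, ← hφa, sub_add_eq_add_sub, ← hφc, hcae, map_add, add_sub_cancel_left]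
    rwa [← he, Fintype.linearCombination_apply]

theorem xb_add_smul_add_smul_notMem_GDCset (hr : LinearIndependent ℝ r)
    (hrecc : recc C ⊆ reccPBset r) (hL : ∀ k ∈ D, lamM xb (r k) C = L k)
    (hLpos : ∀ k ∈ D, 0 < L k) {i j : ι} (hi : i ∈ D) (hj : j ∉ D)
    (hgam : gam xb r C D i j ≤ 0) (t : ℝ) {g : ℝ} (hg : 0 < g) :
    xb + t • r i + g • r j ∉ GDCset xb r C D := by
  intro hmem
  obtain ⟨s, hLs, hst, hrec⟩ :=
    exists_sub_smul_add_smul_mem_recc_of_mem_GDCset hr hrecc hL hLpos hi hj hmem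
  have hLi := hLpos i hi
  have hs : 0 < s := hLi.trans hLs
  have ht : 0 < t := hs.trans_le hst
  have hdir : (lamM xb (r i) C).toReal • r i + (L i * g / t) • r j
      ∈ recc (GDCset xb r C D) := by
    have hcomb : (lamM xb (r i) C).toReal • r i + (L i * g / t) • r j
        = (L i / t) • ((t - s) • r i + g • r j) + (L i * s / t) • r i := by
      rw [hL i hi, EReal.toReal_coe]
      match_scalars <;> field_simp
      ring
    rw [hcomb]
    refine add_mem_recc (smul_mem_recc ?_ (by positivity)) (smul_mem_recc ?_ (by positivity))
    · exact recc_subset_recc_add (recc_subset_recc_recc hrec)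
    · exact mem_recc_GDCset hL hLpos hi
  have hpos : 0 < L i * g / t := by positivity
  have hle : ((L i * g / t : ℝ) : EReal) ≤ gam xb r C D i j := le_sSup ⟨_, ⟨hpos.le, hdir⟩, rfl⟩
  exact ((EReal.coe_pos.2 hpos).trans_le hle).not_ge hgam

end ExcludedSet

theorem exists_lamM_eq_coe_pos {κ : Type*} {xb : Fin n → ℝ} {r : κ → Fin n → ℝ}
    {C : Set (Fin n → ℝ)} {D : Finset κ} (hD : (D : Set κ) ⊆ N1set xb r C ∪ N2set xb r C) :
    ∃ L : κ → ℝ, (∀ k ∈ D, lamM xb (r k) C = L k) ∧ ∀ k ∈ D, 0 < L k := by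
  have hfin : ∀ k ∈ D, 0 < lamM xb (r k) C ∧ lamM xb (r k) C < ⊤ := fun k hk => by
    rcases hD hk with h | h
    exacts [⟨h.1, h.2.1⟩, ⟨h.1, h.2.1⟩]
  refine ⟨fun k => (lamM xb (r k) C).toReal, fun k hk => ?_, fun k hk => ?_⟩
  · exact (EReal.coe_toReal (hfin k hk).2.ne (ne_bot_of_gt (hfin k hk).1)).symm
  · exact EReal.toReal_pos (hfin k hk).1 (hfin k hk).2.ne

theorem exists_gam_nonpos_of_Mset_eq_empty {κ : Type*} {xb : Fin n → ℝ} {r : κ → Fin n → ℝ}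
    {C : Set (Fin n → ℝ)} {D : Finset κ} (hM : Mset xb r C D = ∅) {i : κ} (hi : i ∈ D) :
    ∃ j ∉ D, gam xb r C D i j ≤ 0 := by
  by_contra! h
  exact (hM ▸ ⟨hi, h⟩ : i ∈ (∅ : Set κ))

theorem stmt9_general (xb : Fin n → ℝ) (r : ι → Fin n → ℝ) (hr : LinearIndependent ℝ r)
    (C : Set (Fin n → ℝ))
    (hrecc : recc C ⊆ reccPBset r)
    (D : Finset ι) (hD : (D : Set ι) ⊆ N1set xb r C ∪ N2set xb r C)
    (hM : Mset xb r C D = ∅) :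
    closure (convexHull ℝ (PBset xb r \ GDCset xb r C D)) = PBset xb r := by
  obtain ⟨L, hL, hLpos⟩ := exists_lamM_eq_coe_pos hD
  set S := PBset xb r \ GDCset xb r C D
  have hxb : xb ∈ closure (convexHull ℝ S) :=
    subset_closure (subset_convexHull ℝ S ⟨self_mem_PBset, xb_notMem_GDCset hr hrecc hL hLpos⟩)
  have hray : ∀ k ∈ Finset.univ, ∀ t : ℝ, 0 ≤ t → xb + t • r k ∈ closure (convexHull ℝ S) := by
    intro k _ t ht
    by_cases hk : k ∈ D
    · obtain ⟨j, hj, hgam⟩ := exists_gam_nonpos_of_Mset_eq_empty hM hk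
      refine closure_mono (subset_convexHull ℝ S)
        (mem_closure_of_forall_pos_add_smul_mem (u := r j) fun g hg => ⟨?_, ?_⟩)
      · exact add_smul_mem_PBset (add_smul_mem_PBset self_mem_PBset k ht) j hg.le
      · exact xb_add_smul_add_smul_notMem_GDCset hr hrecc hL hLpos hk hj hgam t hg
    · exact subset_closure (subset_convexHull ℝ S
        ⟨add_smul_mem_PBset self_mem_PBset k ht, xb_add_smul_notMem_GDCset hr hrecc hL hLpos hk t⟩)
  refine subset_antisymm
    (closure_minimal (convexHull_min sdiff_subset convex_PBset) (isClosed_PBset hr)) ?_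
  rintro _ ⟨c, hc, rfl⟩
  exact (convex_convexHull ℝ S).closure.add_sum_smul_mem hxb hray fun k _ => hc k

/-- Proposition 5. If `M = ∅`, then `cl conv(P^B ∖ G_D^C) = P^B`. -/
theorem stmt9 (xb : Fin n → ℝ) (r : ι → Fin n → ℝ) (hr : LinearIndependent ℝ r)
    (C : Set (Fin n → ℝ)) (hCopen : IsOpen C) (hCconv : Convex ℝ C)
    (hxb : xb ∉ closure C) (hrecc : recc C ⊆ reccPBset r)
    (D : Finset ι) (hD : (D : Set ι) ⊆ N1set xb r C ∪ N2set xb r C)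
    (hM : Mset xb r C D = ∅) :
    closure (convexHull ℝ (PBset xb r \ GDCset xb r C D)) = PBset xb r :=
  stmt9_general xb r hr C hrecc D hD hM
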